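/- Let R be a commutative (possibly non-unital) ring with a filtration by ideals R = R_1 ⊇ ... ⊇ R_{n+1} = {0} with R_q·R_k ⊆ R_{q+k}, suppose Tor(R_k/R_{k+1}, ℤ/m) = 0 for all k, and suppose m is coprime to n!. Let p_n(x) = Σ_{k=1}^{n} (-1)^{k-1} (ℓ(n)/k) m^{n-k} x^k with ℓ(n) = lcm(1,...,n). If a, b ∈ R satisfy p_n(a) − p_n(b) ∈ m^n·R, then there exists h ∈ R with a = b + m·h + b·h. -/

import Mathlib

/-!
Up to the factor `ℓ(n) m^n`, `p_n(x)` is the degree-`n` truncation of `log(1 + x/m)`, and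
`m + (b + m h + b h) = (m + b)(1 + h)`. Hence `p_n(b + m h + b h) - p_n(b) - m^n q_n(h)`, with
`q_n` the polynomial `p_n` for `m = 1`, is a polynomial in `b, h` with no terms of degree `≤ n`
(its partial derivatives, multiplied by `m + b` and `1 + h` respectively, are differences of
`n`-th powers), so it vanishes in `R`, where products of `n + 1` elements are zero.

Modulo `R_{k+1}`, `p_n` is additive on `R_k` with linear coefficient `ℓ(n) m^{n-1}`, and `ℓ(n)`
is prime to `m`. So if `a ≡ b + m h + b h (mod R_k)`, the hypothesis `p_n(a) - p_n(b) ∈ m^n R`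
and the identity above force the error to be `m t (mod R_{k+1})` for some `t ∈ R_k` (using that
the graded pieces have no `m`-torsion), and replacing `h` by `h + t + h t` improves the
congruence to `R_{k+1}`. At `k = n + 1` it is an equality.
-/

/-- `ℓ(n) = lcm(1,…,n)`. -/
def lcmN (n : ℕ) : ℕ := (Finset.Icc 1 n).lcm id

/-- `npow1 a j = a^{j+1}` in a non-unital ring. -/
def npow1 {R : Type*} [NonUnitalCommRing R] (a : R) : ℕ → R
  | 0 => a
  | j + 1 => npow1 a j * a

/-- Evaluation of `p_n(x) = ∑_{k=1}^n (-1)^{k-1} (ℓ(n)/k) m^{n-k} x^k` at `a` in a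
non-unital ring (note the constant term vanishes). -/
def pEval {R : Type*} [NonUnitalCommRing R] (m : ℕ) (n : ℕ) (a : R) : R :=
  ∑ k ∈ Finset.Icc 1 n,
    ((-1 : ℤ) ^ (k - 1) * ((lcmN n / k : ℕ) : ℤ) * (m : ℤ) ^ (n - k)) • npow1 a (k - 1)

namespace TruncatedLog

open Finset

section IdealOfVars

open MvPolynomial

variable {σ K : Type*} [CommRing K]

theorem mem_pow_idealOfVars_of_C_mul_mem [NoZeroDivisors K] {c : K} (hc : c ≠ 0)
    {P : MvPolynomial σ K} {k : ℕ} (h : C c * P ∈ idealOfVars σ K ^ k) :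
    P ∈ idealOfVars σ K ^ k := by
  rw [mem_pow_idealOfVars_iff'] at h ⊢
  intro d hd
  simpa [coeff_C_mul, hc] using h d hd

theorem mem_pow_idealOfVars_of_C_add_X_mul_mem [NoZeroDivisors K] {c : K} (hc : c ≠ 0) (i : σ)
    {P : MvPolynomial σ K} {k : ℕ} (h : (C c + X i) * P ∈ idealOfVars σ K ^ k) :
    P ∈ idealOfVars σ K ^ k := by
  induction k with
  | zero => simp
  | succ k ih =>
    have hP : P ∈ idealOfVars σ K ^ k := ih (Ideal.pow_le_pow_right k.le_succ h)
    have hXP : X i * P ∈ idealOfVars σ K ^ (k + 1) := by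
      rw [pow_succ']
      exact Ideal.mul_mem_mul (Ideal.subset_span ⟨i, rfl⟩) hP
    refine mem_pow_idealOfVars_of_C_mul_mem hc ?_
    rw [show C c * P = (C c + X i) * P - X i * P by ring]
    exact sub_mem h hXP

theorem mem_pow_succ_idealOfVars_of_pderiv_mem [NoZeroDivisors K] [CharZero K]
    {f : MvPolynomial σ K} {n : ℕ} (hf : f ∈ idealOfVars σ K)
    (hpderiv : ∀ i, pderiv i f ∈ idealOfVars σ K ^ n) : f ∈ idealOfVars σ K ^ (n + 1) := by
  rw [← pow_one (idealOfVars σ K), mem_pow_idealOfVars_iff'] at hf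
  simp_rw [mem_pow_idealOfVars_iff'] at hpderiv ⊢
  intro d hd
  obtain rfl | hd0 := eq_or_ne d 0
  · exact hf 0 (by simp)
  obtain ⟨i, hi⟩ := Finsupp.ne_iff.mp hd0
  set u := d - Finsupp.single i 1
  have hu : u + Finsupp.single i 1 = d :=
    tsub_add_cancel_of_le (Finsupp.single_le_iff.mpr (Nat.one_le_iff_ne_zero.mpr hi))
  have hdeg : Finsupp.degree u < n := by
    rw [← hu, map_add, Finsupp.degree_single] at hd
    omega
  have := hpderiv i u hdeg
  rw [coeff_pderiv, hu, mul_eq_zero] at this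
  exact this.resolve_right (Nat.cast_add_one_ne_zero _)

theorem aeval_mem_pow_of_mem_pow_idealOfVars {A : Type*} [CommRing A] [Algebra K A]
    {J : Ideal A} {v : σ → A} (hv : ∀ i, v i ∈ J) {f : MvPolynomial σ K} {k : ℕ}
    (hf : f ∈ idealOfVars σ K ^ k) : aeval v f ∈ J ^ k := by
  have := Ideal.mem_map_of_mem (aeval v) hf
  rw [Ideal.map_pow, Ideal.map_span] at this
  refine Ideal.pow_right_mono (Ideal.span_le.mpr ?_) k this
  rintro _ ⟨_, ⟨i, rfl⟩, rfl⟩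
  simpa using hv i

end IdealOfVars

section PPoly

open Polynomial

def pCoeff (m n k : ℕ) : ℤ := (-1) ^ (k - 1) * ((lcmN n / k : ℕ) : ℤ) * (m : ℤ) ^ (n - k)

noncomputable def pPoly (m n : ℕ) : ℤ[X] := ∑ k ∈ Icc 1 n, C (pCoeff m n k) * X ^ k

theorem pCoeff_mul_self {m n k : ℕ} (hk : k ∈ Icc 1 n) :
    pCoeff m n k * k = lcmN n * ((-1) ^ (k - 1) * (m : ℤ) ^ (n - k)) := by
  have hdvd : k ∣ lcmN n := by simpa [lcmN] using Finset.dvd_lcm (f := id) hk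
  have : ((lcmN n / k : ℕ) : ℤ) * k = lcmN n := by exact_mod_cast Nat.div_mul_cancel hdvd
  rw [pCoeff, ← this]
  ring

theorem coeff_zero_pPoly (m n : ℕ) : (pPoly m n).coeff 0 = 0 := by
  simp only [pPoly, finsetSum_coeff, coeff_C_mul_X_pow]
  exact sum_eq_zero fun k hk => if_neg (by grind)

/-- `p_n` is `ℓ(n) m^n log(1 + x/m)` truncated at degree `n`: its derivative is a truncated
geometric series for `ℓ(n) m^n / (m + x)`. -/
theorem mul_derivative_pPoly (m n : ℕ) :
    (C (m : ℤ) + X) * derivative (pPoly m n) = C (lcmN n : ℤ) * (C (m : ℤ) ^ n - (-X) ^ n) := by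
  have hsum : derivative (pPoly m n)
      = C (lcmN n : ℤ) * ∑ j ∈ range n, (-X) ^ j * C (m : ℤ) ^ (n - 1 - j) := by
    rw [pPoly, derivative_sum, mul_sum, ← Finset.Ico_add_one_right_eq_Icc, sum_Ico_eq_sum_range]
    refine sum_congr rfl fun j hj => ?_
    rw [derivative_C_mul_X_pow, pCoeff_mul_self (by grind)]
    simp only [map_mul, map_pow, map_neg, map_one, Nat.add_sub_cancel_left]
    rw [neg_pow, show n - (1 + j) = n - 1 - j by omega]
    ring
  have hgeom := geom_sum₂_mul (-X) (C (m : ℤ)) n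
  rw [hsum]
  linear_combination (-C (lcmN n : ℤ)) * hgeom

variable {A : Type*} [CommRing A] [Algebra ℤ A]

theorem aeval_pPoly_mem {J : Ideal A} {t : A} (ht : t ∈ J) (m n : ℕ) :
    aeval t (pPoly m n) ∈ J := by
  obtain ⟨q, hq⟩ := X_dvd_iff.mpr (coeff_zero_pPoly m n)
  rw [hq, map_mul, aeval_X]
  exact J.mul_mem_right _ ht

theorem add_mul_aeval_derivative_pPoly (m n : ℕ) (t : A) :
    (m + t) * aeval t (derivative (pPoly m n)) = lcmN n * ((m : A) ^ n - (-t) ^ n) := by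
  simpa using congrArg (aeval t) (mul_derivative_pPoly m n)

/-- Were `p_n` the full series `ℓ(n) m^n log(1 + x/m)`, it would turn the product
`m + (x + m y + x y) = (m + x)(1 + y)` into a sum and the defect would vanish. -/
noncomputable def defect (m n : ℕ) (x y : A) : A :=
  aeval (x + m * y + x * y) (pPoly m n) - aeval x (pPoly m n) - (m : A) ^ n * aeval y (pPoly 1 n)

end PPoly

section Defect

open MvPolynomial

theorem defect_X_mem_pow_idealOfVars {m : ℕ} (hm : m ≠ 0) (n : ℕ) :
    defect m n (X 0 : MvPolynomial (Fin 2) ℤ) (X 1) ∈ idealOfVars (Fin 2) ℤ ^ (n + 1) := by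
  set I := idealOfVars (Fin 2) ℤ
  set W : MvPolynomial (Fin 2) ℤ := X 0 + (m : MvPolynomial (Fin 2) ℤ) * X 1 + X 0 * X 1
  have hX (i : Fin 2) : (X i : MvPolynomial (Fin 2) ℤ) ∈ I := Ideal.subset_span ⟨i, rfl⟩
  have hW : W ∈ I := add_mem (add_mem (hX 0) (I.mul_mem_left _ (hX 1))) (I.mul_mem_right _ (hX 0))
  have hpow {t : MvPolynomial (Fin 2) ℤ} (ht : t ∈ I) : (-t) ^ n ∈ I ^ n :=
    Ideal.pow_mem_pow (neg_mem ht) n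
  -- `(m + x)(1 + y) = m + W`, so `(m + x) ∂ₓ` and `(1 + y) ∂_y` of the defect are
  -- differences of `n`-th powers.
  have h0 : (C (m : ℤ) + X 0) * pderiv 0 (defect m n (X 0) (X 1))
      = (lcmN n : MvPolynomial (Fin 2) ℤ) * ((-X 0) ^ n - (-W) ^ n) := by
    have hWm := add_mul_aeval_derivative_pPoly m n W
    have hXm := add_mul_aeval_derivative_pPoly m n (X 0 : MvPolynomial (Fin 2) ℤ)
    simp only [defect, W, map_sub, map_add, Derivation.map_aeval, Derivation.leibniz,
      Derivation.leibniz_pow, Derivation.map_natCast, pderiv_X, Pi.single_eq_same,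
      Pi.single_eq_of_ne one_ne_zero, smul_eq_mul, map_natCast]
    linear_combination hWm - hXm
  have h1 : (C (1 : ℤ) + X 1) * pderiv 1 (defect m n (X 0) (X 1))
      = (lcmN n : MvPolynomial (Fin 2) ℤ)
        * ((m : MvPolynomial (Fin 2) ℤ) ^ n * (-X 1) ^ n - (-W) ^ n) := by
    have hWm := add_mul_aeval_derivative_pPoly m n W
    have hX1 := add_mul_aeval_derivative_pPoly 1 n (X 1 : MvPolynomial (Fin 2) ℤ)
    simp only [defect, W, map_sub, map_add, Derivation.map_aeval, Derivation.leibniz,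
      Derivation.leibniz_pow, Derivation.map_natCast, pderiv_X, Pi.single_eq_same,
      Pi.single_eq_of_ne zero_ne_one, smul_eq_mul, map_one]
    linear_combination hWm - (m : MvPolynomial (Fin 2) ℤ) ^ n * hX1
  refine mem_pow_succ_idealOfVars_of_pderiv_mem ?_ (Fin.forall_fin_two.mpr ⟨?_, ?_⟩)
  · exact sub_mem (sub_mem (aeval_pPoly_mem hW m n) (aeval_pPoly_mem (hX 0) m n))
      (I.mul_mem_left _ (aeval_pPoly_mem (hX 1) 1 n))
  · refine mem_pow_idealOfVars_of_C_add_X_mul_mem (Int.natCast_ne_zero.mpr hm) 0 ?_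
    rw [h0]
    exact (I ^ n).mul_mem_left _ (sub_mem (hpow (hX 0)) (hpow hW))
  · refine mem_pow_idealOfVars_of_C_add_X_mul_mem one_ne_zero 1 ?_
    rw [h1]
    exact (I ^ n).mul_mem_left _ (sub_mem ((I ^ n).mul_mem_left _ (hpow (hX 1))) (hpow hW))

theorem defect_mem_pow {A : Type*} [CommRing A] [Algebra ℤ A] {J : Ideal A} {x y : A}
    (hx : x ∈ J) (hy : y ∈ J) {m : ℕ} (hm : m ≠ 0) (n : ℕ) : defect m n x y ∈ J ^ (n + 1) := by
  have := aeval_mem_pow_of_mem_pow_idealOfVars (v := ![x, y]) (Fin.forall_fin_two.mpr ⟨hx, hy⟩)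
    (defect_X_mem_pow_idealOfVars hm n)
  simpa [defect, ← Polynomial.aeval_algHom_apply] using this

end Defect

section Twist

open Polynomial

variable {R : Type*} [NonUnitalCommRing R]

/-- In the unitization, `m + twist m b h = (m + b) * (1 + h)`. -/
def twist (m : ℕ) (b h : R) : R := b + (m : ℤ) • h + b * h

theorem twist_twist (m : ℕ) (b h t : R) :
    twist m (twist m b h) t = twist m b (h + t + h * t) := by
  simp only [twist, smul_add, add_mul, mul_add, smul_mul_assoc, mul_assoc]
  abel

theorem map_npow1 {A : Type*} [Semiring A] (f : R →ₙ+* A) (a : R) (j : ℕ) :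
    f (npow1 a j) = f a ^ (j + 1) := by
  induction j with
  | zero => simp [npow1]
  | succ j ih => rw [npow1, map_mul, ih, ← pow_succ]

variable {A : Type*} [CommRing A] [Algebra ℤ A]

theorem map_pEval (f : R →ₙ+* A) (m n : ℕ) (a : R) :
    f (pEval m n a) = aeval (f a) (pPoly m n) := by
  rw [pEval, pPoly, map_sum, map_sum]
  refine sum_congr rfl fun k hk => ?_
  rw [map_zsmul, map_npow1, Nat.sub_add_cancel (mem_Icc.mp hk).1, map_mul, aeval_C, aeval_X_pow,
    zsmul_eq_mul, eq_intCast, pCoeff]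

theorem map_pEval_twist_sub (f : R →ₙ+* A) (m n : ℕ) (b h : R) :
    f (pEval m n (twist m b h) - pEval m n b - ((m : ℤ) ^ n) • pEval 1 n h)
      = defect m n (f b) (f h) := by
  simp only [map_sub, map_zsmul, map_pEval, twist, map_add, map_mul, defect, zsmul_eq_mul]
  push_cast
  ring

end Twist

section Filtration

variable {R : Type*} [NonUnitalCommRing R]

structure IsMulFiltration (F : ℕ → AddSubgroup R) : Prop where
  top : F 1 = ⊤
  succ_le : ∀ k, 1 ≤ k → F (k + 1) ≤ F k
  mul_mem : ∀ q k, 1 ≤ q → 1 ≤ k → ∀ x ∈ F q, ∀ y ∈ F k, x * y ∈ F (q + k)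

/-- `Tor(R_k/R_{k+1}, ℤ/m) = 0` for `1 ≤ k ≤ n`. -/
def GradedTorsionFree (F : ℕ → AddSubgroup R) (m n : ℕ) : Prop :=
  ∀ k, 1 ≤ k → k ≤ n → ∀ x ∈ F k, ((m : ℤ) • x ∈ F (k + 1) → x ∈ F (k + 1))

namespace IsMulFiltration

variable {F : ℕ → AddSubgroup R}

theorem mem_one (hF : IsMulFiltration F) (x : R) : x ∈ F 1 :=
  hF.top ▸ AddSubgroup.mem_top x

theorem antitone (hF : IsMulFiltration F) {i j : ℕ} (hi : 1 ≤ i) (hij : i ≤ j) : F j ≤ F i := by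
  induction j, hij using Nat.le_induction with
  | base => exact le_rfl
  | succ j hj ih => exact (hF.succ_le j (hi.trans hj)).trans ih

theorem mul_mem_succ (hF : IsMulFiltration F) {k : ℕ} (hk : 1 ≤ k) (x : R) {y : R}
    (hy : y ∈ F k) : x * y ∈ F (k + 1) :=
  add_comm 1 k ▸ hF.mul_mem 1 k le_rfl hk x (hF.mem_one x) y hy

theorem npow1_mem (hF : IsMulFiltration F) (x : R) (j : ℕ) : npow1 x j ∈ F (j + 1) := by
  induction j with
  | zero => exact hF.mem_one x
  | succ j ih =>
    rw [npow1, mul_comm]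
    exact hF.mul_mem_succ (Nat.le_add_left 1 j) x ih

theorem npow1_add_sub_mem (hF : IsMulFiltration F) {k : ℕ} (hk : 1 ≤ k) (x : R) {e : R}
    (he : e ∈ F k) (j : ℕ) : npow1 (x + e) j - npow1 x j ∈ F (k + j) := by
  induction j with
  | zero => simpa [npow1] using he
  | succ j ih =>
    have hsplit : npow1 (x + e) (j + 1) - npow1 x (j + 1)
        = (x + e) * (npow1 (x + e) j - npow1 x j) + npow1 x j * e := by
      rw [npow1, npow1, mul_sub, mul_comm (x + e), mul_comm (x + e), mul_add (npow1 x j)]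
      abel
    rw [hsplit]
    refine add_mem (hF.mul_mem_succ (hk.trans (Nat.le_add_right k j)) _ ih) ?_
    have := hF.mul_mem (j + 1) k (by omega) hk _ (hF.npow1_mem x j) e he
    rwa [show j + 1 + k = k + (j + 1) by omega] at this

theorem pEval_add_sub_mem (hF : IsMulFiltration F) (m : ℕ) {n : ℕ} (hn : 1 ≤ n) {k : ℕ}
    (hk : 1 ≤ k) (x : R) {e : R} (he : e ∈ F k) :
    pEval m n (x + e) - pEval m n x - ((lcmN n : ℤ) * (m : ℤ) ^ (n - 1)) • e ∈ F (k + 1) := by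
  have h1 : 1 ∈ Icc 1 n := mem_Icc.mpr ⟨le_rfl, hn⟩
  rw [pEval, pEval, ← sum_sub_distrib, ← add_sum_erase _ _ h1]
  simp only [← smul_sub, npow1, add_sub_cancel_left, le_refl, tsub_eq_zero_of_le, pow_zero,
    Nat.div_one, one_mul]
  refine sum_mem fun j hj => AddSubgroup.zsmul_mem _ ?_ _
  obtain ⟨hj1, hj⟩ := mem_erase.mp hj
  exact hF.antitone (by omega) (by grind) (hF.npow1_add_sub_mem hk x he (j - 1))

theorem mem_of_zsmul_mem (hF : IsMulFiltration F) {m n : ℕ}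
    (htor : GradedTorsionFree F m n)
    {k : ℕ} (hk : 1 ≤ k) (hkn : k ≤ n + 1) {x : R} (hx : (m : ℤ) • x ∈ F k) : x ∈ F k := by
  induction k, hk using Nat.le_induction generalizing x with
  | base => exact hF.mem_one x
  | succ k hk ih =>
    exact htor k hk (by omega) x (ih (by omega) (hF.succ_le k hk hx)) hx

theorem mem_of_pow_zsmul_mem (hF : IsMulFiltration F) {m n : ℕ}
    (htor : GradedTorsionFree F m n)
    {k : ℕ} (hk : 1 ≤ k) (hkn : k ≤ n + 1) (j : ℕ) {x : R} (hx : ((m : ℤ) ^ j) • x ∈ F k) :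
    x ∈ F k := by
  induction j generalizing x with
  | zero => simpa using hx
  | succ j ih =>
    rw [pow_succ, mul_smul] at hx
    exact hF.mem_of_zsmul_mem htor hk hkn (ih hx)

theorem span_image_mul_le (hF : IsMulFiltration F) {A : Type*} [CommRing A] (f : R →ₙ+* A)
    {q k : ℕ} (hq : 1 ≤ q) (hk : 1 ≤ k) :
    Ideal.span (f '' F q) * Ideal.span (f '' F k) ≤ Ideal.span (f '' F (q + k)) := by
  rw [Ideal.span_mul_span']
  refine Ideal.span_mono ?_
  rintro _ ⟨_, ⟨x, hx, rfl⟩, _, ⟨y, hy, rfl⟩, rfl⟩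
  exact ⟨x * y, hF.mul_mem q k hq hk x hx y hy, map_mul f x y⟩

theorem span_image_one_pow_le (hF : IsMulFiltration F) {A : Type*} [CommRing A] (f : R →ₙ+* A)
    {k : ℕ} (hk : 1 ≤ k) :
    Ideal.span (f '' F 1) ^ k ≤ Ideal.span (f '' F k) := by
  induction k, hk using Nat.le_induction with
  | base => rw [pow_one]
  | succ k hk ih =>
    rw [pow_succ]
    exact (Ideal.mul_mono_left ih).trans (hF.span_image_mul_le f hk le_rfl)

theorem pEval_twist_sub (hF : IsMulFiltration F) {n : ℕ} (hbot : F (n + 1) = ⊥) {m : ℕ}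
    (hm : m ≠ 0) (b h : R) :
    pEval m n (twist m b h) - pEval m n b = ((m : ℤ) ^ n) • pEval 1 n h := by
  let ι : R →ₙ+* Unitization ℤ R := Unitization.inrNonUnitalAlgHom ℤ R
  have hmem (x : R) : ι x ∈ Ideal.span (ι '' F 1) := Ideal.subset_span ⟨x, hF.mem_one x, rfl⟩
  have hdefect : defect m n (ι b) (ι h) = 0 := by
    have := hF.span_image_one_pow_le ι n.succ_pos (defect_mem_pow (hmem b) (hmem h) hm n)
    simpa [hbot] using this
  rw [← sub_eq_zero, ← map_eq_zero_iff ι Unitization.inr_injective, map_pEval_twist_sub, hdefect]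

theorem exists_mem_sub_zsmul_mem (hF : IsMulFiltration F) {m n : ℕ} (hn : 1 ≤ n)
    (htor : GradedTorsionFree F m n)
    (hcop : IsCoprime ((m : ℤ) ^ n) (lcmN n)) {k : ℕ} (hk : 1 ≤ k) (hkn : k ≤ n) {e s : R}
    (he : e ∈ F k) (hs : ((lcmN n : ℤ) * (m : ℤ) ^ (n - 1)) • e - ((m : ℤ) ^ n) • s ∈ F (k + 1)) :
    ∃ t ∈ F k, e - (m : ℤ) • t ∈ F (k + 1) := by
  obtain ⟨N, rfl⟩ : ∃ N, n = N + 1 := ⟨n - 1, by omega⟩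
  rw [Nat.add_sub_cancel] at hs
  obtain ⟨u, v, huv⟩ := hcop
  set g := ((lcmN (N + 1) : ℤ) * (m : ℤ) ^ N) • e - ((m : ℤ) ^ (N + 1)) • s
  set t := (u * (m : ℤ) ^ N) • e + v • s
  -- Bézout: `m^N e = m^{N+1} t + v g`
  have hg : ((m : ℤ) ^ N) • (e - (m : ℤ) • t) = v • g := by
    simp only [g, t, smul_sub, smul_add, smul_smul]
    match_scalars
    · linear_combination -(m : ℤ) ^ N * huv
    · ring
  have hgm : ((m : ℤ) ^ N) • (e - (m : ℤ) • t) ∈ F (k + 1) := hg ▸ zsmul_mem hs v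
  refine ⟨t, ?_, hF.mem_of_pow_zsmul_mem htor (by omega) (by omega) N hgm⟩
  have hmt : ((m : ℤ) ^ (N + 1)) • t
      = ((m : ℤ) ^ N) • e - ((m : ℤ) ^ N) • (e - (m : ℤ) • t) := by
    rw [smul_sub, smul_smul, ← pow_succ]
    abel
  refine hF.mem_of_pow_zsmul_mem htor hk (by omega) (N + 1) ?_
  rw [hmt]
  exact sub_mem (zsmul_mem he _) (hF.antitone hk (by omega) hgm)

theorem exists_sub_twist_mem_succ (hF : IsMulFiltration F) {m n : ℕ} (hn : 1 ≤ n)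
    (hbot : F (n + 1) = ⊥) (hm : m ≠ 0)
    (htor : GradedTorsionFree F m n)
    (hcop : IsCoprime ((m : ℤ) ^ n) (lcmN n)) {a b r : R}
    (hr : pEval m n a - pEval m n b = ((m : ℤ) ^ n) • r) {k : ℕ} (hk : 1 ≤ k) (hkn : k ≤ n)
    {h : R} (he : a - twist m b h ∈ F k) : ∃ h', a - twist m b h' ∈ F (k + 1) := by
  set b' := twist m b h
  have hs : ((lcmN n : ℤ) * (m : ℤ) ^ (n - 1)) • (a - b') - ((m : ℤ) ^ n) • (r - pEval 1 n h)
      ∈ F (k + 1) := by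
    have hlin := hF.pEval_add_sub_mem m hn hk b' he
    have hquot : pEval m n a - pEval m n b' = ((m : ℤ) ^ n) • (r - pEval 1 n h) := by
      rw [smul_sub, ← hr, ← hF.pEval_twist_sub hbot hm b h]
      abel
    rw [add_sub_cancel, hquot] at hlin
    convert neg_mem hlin using 1
    abel
  obtain ⟨t, ht, het⟩ := hF.exists_mem_sub_zsmul_mem hn htor hcop hk hkn he hs
  refine ⟨h + t + h * t, ?_⟩
  have hsplit : a - twist m b' t = (a - b' - (m : ℤ) • t) - b' * t := by
    simp only [twist]
    abel
  rw [← twist_twist, hsplit]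
  exact sub_mem het (hF.mul_mem_succ hk b' ht)

end IsMulFiltration

end Filtration

theorem lcmN_dvd_factorial (n : ℕ) : lcmN n ∣ n.factorial :=
  Finset.lcm_dvd fun _ hk => Nat.dvd_factorial (mem_Icc.mp hk).1 (mem_Icc.mp hk).2

end TruncatedLog

open TruncatedLog in
/-- Lemma 6.1: for a filtered commutative (possibly non-unital) ring
`R = R_1 ⊇ … ⊇ R_{n+1} = 0` with `R_q·R_k ⊆ R_{q+k}`, with all quotients `R_k/R_{k+1}`
without `m`-torsion, and `m` coprime to `n!`: if `p_n(a) − p_n(b) ∈ m^n·R`, then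
`a = b + m·h + b·h` for some `h ∈ R`. -/
theorem stmt15 (R : Type*) [NonUnitalCommRing R] (n : ℕ) (hn : 1 ≤ n)
    (F : ℕ → AddSubgroup R)
    (htop : F 1 = ⊤)
    (hmono : ∀ k, 1 ≤ k → F (k + 1) ≤ F k)
    (hbot : F (n + 1) = ⊥)
    (hmul : ∀ q k, 1 ≤ q → 1 ≤ k → ∀ x ∈ F q, ∀ y ∈ F k, x * y ∈ F (q + k))
    (m : ℕ) (hm : 1 ≤ m) (hcop : Nat.Coprime m n.factorial)
    (htor : ∀ k, 1 ≤ k → k ≤ n → ∀ x ∈ F k, ((m : ℤ) • x ∈ F (k + 1) → x ∈ F (k + 1)))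
    (a b : R) (hdiv : ∃ r : R, pEval m n a - pEval m n b = ((m : ℤ) ^ n) • r) :
    ∃ h : R, a = b + (m : ℤ) • h + b * h := by
  obtain ⟨r, hr⟩ := hdiv
  have hF : IsMulFiltration F := ⟨htop, hmono, hmul⟩
  have hcop' : IsCoprime ((m : ℤ) ^ n) (lcmN n) := by
    have := (hcop.coprime_dvd_right (lcmN_dvd_factorial n)).pow_left n
    exact_mod_cast Nat.isCoprime_iff_coprime.mpr this
  have hstep : ∀ k, 1 ≤ k → k ≤ n + 1 → ∃ h, a - twist m b h ∈ F k := by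
    intro k hk
    induction k, hk using Nat.le_induction with
    | base => exact fun _ => ⟨0, hF.mem_one _⟩
    | succ k hk ih =>
      intro hkn
      obtain ⟨h, he⟩ := ih (by omega)
      exact hF.exists_sub_twist_mem_succ hn hbot (by omega) htor hcop' hr hk (by omega) he
  obtain ⟨h, hh⟩ := hstep (n + 1) (by omega) le_rfl
  rw [hbot, AddSubgroup.mem_bot, sub_eq_zero] at hh
  exact ⟨h, hh⟩
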